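/- arXiv:2105.04336 — 3 statements merged into one kernel-verified Lean document; each statement's English description precedes it below -/
import Mathlib

section
/- Let C be a convex cone of N×N Hermitian matrices. Then I_Sym ⊆ C if and only if V_Sym ⊆ C. -/
open Matrix

/-- The permutation matrix `P_π` on the `m`-fold tensor power of `ℂ^n`, indexing
coordinates by functions `f : Fin m → Fin n`, with entries
`(P_π)_{f,g} = 1` if `g = f ∘ π⁻¹` and `0` otherwise. -/
def permMat (n m : ℕ) (π : Equiv.Perm (Fin m)) :
    Matrix (Fin m → Fin n) (Fin m → Fin n) ℂ :=
  Matrix.of fun f g => if g = f ∘ π.symm then 1 else 0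

/-- The symmetriser `Π_Sym = (1/m!) Σ_π P_π`. -/
noncomputable def symmetriser (n m : ℕ) :
    Matrix (Fin m → Fin n) (Fin m → Fin n) ℂ :=
  (m.factorial : ℂ)⁻¹ • ∑ π : Equiv.Perm (Fin m), permMat n m π

/-- The symmetrically permuted matrix `S_{l,r}(G) = (1/2)(P_l† G P_r + P_r† G P_l)`. -/
noncomputable def symPerm (n m : ℕ) (πl πr : Equiv.Perm (Fin m))
    (G : Matrix (Fin m → Fin n) (Fin m → Fin n) ℂ) :
    Matrix (Fin m → Fin n) (Fin m → Fin n) ℂ :=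
  (2 : ℂ)⁻¹ •
    ((permMat n m πl)ᴴ * G * permMat n m πr + (permMat n m πr)ᴴ * G * permMat n m πl)

/-- `I_Sym`: the set of matrices of the form `G - S_{l,r}(G)` with `G` Hermitian. -/
def ISym (n m : ℕ) : Set (Matrix (Fin m → Fin n) (Fin m → Fin n) ℂ) :=
  {A | ∃ (G : Matrix (Fin m → Fin n) (Fin m → Fin n) ℂ) (πl πr : Equiv.Perm (Fin m)),
      G.IsHermitian ∧ A = G - symPerm n m πl πr G}

/-- `V_Sym`: the set of matrices of the form `G - Π_Sym G Π_Sym` with `G` Hermitian. -/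
def VSym (n m : ℕ) : Set (Matrix (Fin m → Fin n) (Fin m → Fin n) ℂ) :=
  {A | ∃ G : Matrix (Fin m → Fin n) (Fin m → Fin n) ℂ,
      G.IsHermitian ∧ A = G - symmetriser n m * G * symmetriser n m}

lemma permMat_mul {n m : ℕ} (σ τ : Equiv.Perm (Fin m)) :
    permMat n m σ * permMat n m τ = permMat n m (τ * σ) := by
  ext f h
  simp only [permMat, Matrix.mul_apply, Matrix.of_apply]
  rw [Finset.sum_eq_single (f ∘ ⇑σ.symm)]
  · have : (f ∘ ⇑σ.symm) ∘ ⇑τ.symm = f ∘ ⇑(τ * σ).symm := by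
      ext x; simp [Equiv.Perm.mul_def]
    simp [this]
  · intro b _ hb; simp [if_neg hb]
  · intro h; exact absurd (Finset.mem_univ _) h

lemma permMat_conjTranspose {n m : ℕ} (σ : Equiv.Perm (Fin m)) :
    (permMat n m σ)ᴴ = permMat n m σ⁻¹ := by
  ext f g
  simp only [permMat, conjTranspose_apply, of_apply]
  have : (f = g ∘ ⇑σ.symm) ↔ (g = f ∘ ⇑σ⁻¹.symm) := by
    constructor
    · intro h; subst h; ext x; simp [Equiv.Perm.inv_def]
    · intro h; subst h; ext x; simp [Equiv.Perm.inv_def]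
  by_cases h : f = g ∘ ⇑σ.symm
  · rw [if_pos h, if_pos (this.mp h)]; simp
  · rw [if_neg h, if_neg (fun hh => h (this.mpr hh))]; simp

lemma sum_permMat_mul {n m : ℕ} (σ : Equiv.Perm (Fin m)) :
    (∑ π : Equiv.Perm (Fin m), permMat n m π) * permMat n m σ
      = ∑ π : Equiv.Perm (Fin m), permMat n m π := by
  rw [Finset.sum_mul]
  calc ∑ π : Equiv.Perm (Fin m), permMat n m π * permMat n m σ
      = ∑ π : Equiv.Perm (Fin m), permMat n m (σ * π) := by
        simp [permMat_mul]
    _ = ∑ π : Equiv.Perm (Fin m), permMat n m π :=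
        Fintype.sum_equiv (Equiv.mulLeft σ) _ _ (fun π => rfl)

lemma permMat_mul_sum {n m : ℕ} (σ : Equiv.Perm (Fin m)) :
    permMat n m σ * (∑ π : Equiv.Perm (Fin m), permMat n m π)
      = ∑ π : Equiv.Perm (Fin m), permMat n m π := by
  rw [Finset.mul_sum]
  calc ∑ π : Equiv.Perm (Fin m), permMat n m σ * permMat n m π
      = ∑ π : Equiv.Perm (Fin m), permMat n m (π * σ) := by
        simp [permMat_mul]
    _ = ∑ π : Equiv.Perm (Fin m), permMat n m π :=
        Fintype.sum_equiv (Equiv.mulRight σ) _ _ (fun π => rfl)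

lemma symmetriser_mul_permMat {n m : ℕ} (σ : Equiv.Perm (Fin m)) :
    symmetriser n m * permMat n m σ = symmetriser n m := by
  unfold symmetriser
  rw [smul_mul_assoc, sum_permMat_mul]

lemma permMat_mul_symmetriser {n m : ℕ} (σ : Equiv.Perm (Fin m)) :
    permMat n m σ * symmetriser n m = symmetriser n m := by
  unfold symmetriser
  rw [mul_smul_comm, permMat_mul_sum]

lemma symmetriser_symPerm {n m : ℕ} (πl πr : Equiv.Perm (Fin m))
    (G : Matrix (Fin m → Fin n) (Fin m → Fin n) ℂ) :
    symmetriser n m * ((permMat n m πl)ᴴ * G * permMat n m πr) * symmetriser n m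
      = symmetriser n m * G * symmetriser n m := by
  rw [permMat_conjTranspose]
  rw [show symmetriser n m * (permMat n m πl⁻¹ * G * permMat n m πr) * symmetriser n m
      = (symmetriser n m * permMat n m πl⁻¹) * G * (permMat n m πr * symmetriser n m) by
    rw [← Matrix.mul_assoc, ← Matrix.mul_assoc, Matrix.mul_assoc (symmetriser n m * permMat n m πl⁻¹ * G)]]
  rw [symmetriser_mul_permMat, permMat_mul_symmetriser, Matrix.mul_assoc]

lemma symPerm_isHermitian {n m : ℕ} (πl πr : Equiv.Perm (Fin m))
    {G : Matrix (Fin m → Fin n) (Fin m → Fin n) ℂ} (hG : G.IsHermitian) :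
    (symPerm n m πl πr G).IsHermitian := by
  unfold symPerm Matrix.IsHermitian
  rw [conjTranspose_smul]
  simp only [conjTranspose_add, conjTranspose_mul, conjTranspose_conjTranspose, hG.eq]
  rw [add_comm, ← Matrix.mul_assoc, ← Matrix.mul_assoc]
  norm_num

lemma symmetriser_symPerm' {n m : ℕ} (πl πr : Equiv.Perm (Fin m))
    (G : Matrix (Fin m → Fin n) (Fin m → Fin n) ℂ) :
    symmetriser n m * symPerm n m πl πr G * symmetriser n m
      = symmetriser n m * G * symmetriser n m := by
  unfold symPerm
  rw [Matrix.mul_smul, Matrix.smul_mul, Matrix.mul_add, Matrix.add_mul,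
    symmetriser_symPerm, symmetriser_symPerm, smul_add, ← two_smul ℂ, smul_smul]
  norm_num

lemma sum_permMat_conjTranspose {n m : ℕ} :
    (∑ π : Equiv.Perm (Fin m), permMat n m π)ᴴ = ∑ π : Equiv.Perm (Fin m), permMat n m π := by
  rw [conjTranspose_sum]
  simp only [permMat_conjTranspose]
  exact Fintype.sum_equiv (Equiv.inv _) _ _ fun π => rfl

lemma sum_symPerm {n m : ℕ} (G : Matrix (Fin m → Fin n) (Fin m → Fin n) ℂ) :
    ∑ p : Equiv.Perm (Fin m) × Equiv.Perm (Fin m), symPerm n m p.1 p.2 G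
      = (∑ π : Equiv.Perm (Fin m), permMat n m π) * G *
          (∑ π : Equiv.Perm (Fin m), permMat n m π) := by
  unfold symPerm
  rw [← Finset.smul_sum, Finset.sum_add_distrib]
  have hswap : ∑ p : Equiv.Perm (Fin m) × Equiv.Perm (Fin m),
      (permMat n m p.2)ᴴ * G * permMat n m p.1
      = ∑ p : Equiv.Perm (Fin m) × Equiv.Perm (Fin m),
      (permMat n m p.1)ᴴ * G * permMat n m p.2 :=
    Fintype.sum_equiv (Equiv.prodComm _ _) _ _ fun p => rfl
  rw [hswap, ← two_smul ℂ, smul_smul]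
  norm_num
  rw [show (∑ π : Equiv.Perm (Fin m), permMat n m π) * G *
          (∑ π : Equiv.Perm (Fin m), permMat n m π)
      = (∑ π : Equiv.Perm (Fin m), permMat n m π)ᴴ * G *
          (∑ π : Equiv.Perm (Fin m), permMat n m π) from by rw [sum_permMat_conjTranspose]]
  rw [conjTranspose_sum, Finset.sum_mul, Finset.sum_mul]
  simp only [Finset.mul_sum, Matrix.mul_assoc, Fintype.sum_prod_type]

lemma symm_mul_symm {n m : ℕ} (G : Matrix (Fin m → Fin n) (Fin m → Fin n) ℂ) :
    symmetriser n m * G * symmetriser n m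
      = ((m.factorial : ℂ)⁻¹ * (m.factorial : ℂ)⁻¹) •
        ((∑ π : Equiv.Perm (Fin m), permMat n m π) * G *
          (∑ π : Equiv.Perm (Fin m), permMat n m π)) := by
  unfold symmetriser
  rw [Matrix.smul_mul, Matrix.smul_mul, Matrix.mul_smul, smul_smul]

lemma zero_mem_ISym {n m : ℕ} : (0 : Matrix (Fin m → Fin n) (Fin m → Fin n) ℂ) ∈ ISym n m := by
  refine ⟨0, 1, 1, Matrix.isHermitian_zero, ?_⟩
  simp [symPerm]

lemma sum_mem_of_closed {α : Type*} [AddCommMonoid α] {C : Set α}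
    (h0 : (0 : α) ∈ C)
    (hAdd : ∀ A ∈ C, ∀ B ∈ C, A + B ∈ C) {ι : Type*} (s : Finset ι)
    (f : ι → α) (hf : ∀ i ∈ s, f i ∈ C) : ∑ i ∈ s, f i ∈ C := by
  classical
  induction s using Finset.induction_on with
  | empty => simpa using h0
  | @insert a s ha ih =>
    rw [Finset.sum_insert ha]
    exact hAdd _ (hf a (by simp)) _ (ih fun i hi => hf i (by simp [hi]))

/-- For a convex cone `C` of Hermitian matrices, `I_Sym ⊆ C` iff `V_Sym ⊆ C`. -/
theorem ISym_subset_iff_VSym_subset (n m : ℕ) (hn : 1 ≤ n) (hm : 1 ≤ m)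
    (C : Set (Matrix (Fin m → Fin n) (Fin m → Fin n) ℂ))
    (hHerm : ∀ A ∈ C, A.IsHermitian)
    (hAdd : ∀ A ∈ C, ∀ B ∈ C, A + B ∈ C)
    (hSMul : ∀ (c : ℝ), 0 ≤ c → ∀ A ∈ C, (c : ℂ) • A ∈ C)
    : ISym n m ⊆ C ↔ VSym n m ⊆ C := by
  have hfac : (m.factorial : ℂ) ≠ 0 := Nat.cast_ne_zero.mpr m.factorial_ne_zero
  constructor
  · intro hI A hA
    obtain ⟨G, hG, rfl⟩ := hA
    have key : G - symmetriser n m * G * symmetriser n m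
        = ((((m.factorial * m.factorial : ℕ) : ℝ)⁻¹ : ℝ) : ℂ) •
          ∑ p : Equiv.Perm (Fin m) × Equiv.Perm (Fin m), (G - symPerm n m p.1 p.2 G) := by
      have hc : ((((m.factorial * m.factorial : ℕ) : ℝ)⁻¹ : ℝ) : ℂ)
          = (m.factorial : ℂ)⁻¹ * (m.factorial : ℂ)⁻¹ := by
        push_cast
        rw [mul_inv]
      rw [Finset.sum_sub_distrib, sum_symPerm, Finset.sum_const, Finset.card_univ,
        Fintype.card_prod, Fintype.card_perm, Fintype.card_fin, symm_mul_symm,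
        smul_sub, hc, ← hc]
      congr 1
      rw [← Nat.cast_smul_eq_nsmul ℂ, smul_smul]
      push_cast
      rw [inv_mul_cancel₀ (mul_ne_zero hfac hfac), one_smul]
    rw [key]
    refine hSMul _ (by positivity) _ ?_
    refine sum_mem_of_closed (hI zero_mem_ISym) hAdd _ _ fun p _ => ?_
    exact hI ⟨G, p.1, p.2, hG, rfl⟩
  · intro hV A hA
    obtain ⟨G, πl, πr, hG, rfl⟩ := hA
    apply hV
    refine ⟨G - symPerm n m πl πr G, hG.sub (symPerm_isHermitian πl πr hG), ?_⟩
    have h0 : symmetriser n m * (G - symPerm n m πl πr G) * symmetriser n m = 0 := by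
      rw [Matrix.mul_sub, Matrix.sub_mul, symmetriser_symPerm', sub_self]
    rw [h0, sub_zero]
end

section
/- Let ρ be an N×N density matrix. Then the following are equivalent: (1) for all permutations π_l, π_r ∈ S_m, ρ = (1/2)(P_{π_r} ρ P_{π_l}† + P_{π_l} ρ P_{π_r}†); (2) ρ = Π_Sym ρ Π_Sym. -/
/-!
Taking `π_l = 1` and averaging over `π_r` turns the exchangeability condition into
`ρ = (Π ρ + ρ Π) / 2`, where `Π = Π_Sym` is the average of the representation `π ↦ P_π⁻¹`.
Since `Π` is idempotent, multiplying this on the left and on the right by `Π` gives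
`Π ρ = Π ρ Π = ρ Π`, hence `ρ = Π ρ Π`. Conversely `P_σ Π = Π = Π P_σ` for every `σ`, so
`ρ = Π ρ Π` is fixed by every `ρ ↦ P_{π_r} ρ P_{π_l}†`.
-/

open Matrix ComplexOrder

section

variable {𝕜 M : Type*} [DivisionRing 𝕜] [NeZero (2 : 𝕜)] [AddCommGroup M] [Module 𝕜 M]

lemma inv_two_smul_add_self (x : M) : (2 : 𝕜)⁻¹ • (x + x) = x := by
  rw [← two_smul 𝕜 x, inv_smul_smul₀ two_ne_zero]

lemma eq_of_eq_inv_two_smul_add {x y : M} (h : x = (2 : 𝕜)⁻¹ • (x + y)) : x = y := by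
  have h2 : (2 : 𝕜) • x = x + y := by
    conv_lhs => rw [h]
    rw [smul_inv_smul₀ two_ne_zero]
  rw [two_smul] at h2
  exact add_left_cancel h2

end

lemma eq_mul_mul_of_eq_inv_two_smul_add {𝕜 A : Type*} [Field 𝕜] [NeZero (2 : 𝕜)] [Ring A]
    [Algebra 𝕜 A] {e x : A} (he : e * e = e) (h : x = (2 : 𝕜)⁻¹ • (e * x + x * e)) :
    x = e * x * e := by
  have hl : e * x = e * x * e := eq_of_eq_inv_two_smul_add (𝕜 := 𝕜) <|
    calc e * x = e * ((2 : 𝕜)⁻¹ • (e * x + x * e)) := congrArg (e * ·) h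
      _ = (2 : 𝕜)⁻¹ • (e * x + e * x * e) := by
        rw [mul_smul_comm, mul_add, ← mul_assoc, he, ← mul_assoc]
  have hr : x * e = e * x * e := eq_of_eq_inv_two_smul_add (𝕜 := 𝕜) <|
    calc x * e = (2 : 𝕜)⁻¹ • (e * x + x * e) * e := congrArg (· * e) h
      _ = (2 : 𝕜)⁻¹ • (x * e + e * x * e) := by
        rw [smul_mul_assoc, add_mul, mul_assoc x, he, add_comm]
  conv_lhs => rw [h, hl, hr]
  exact inv_two_smul_add_self _

section GroupAverage

variable (𝕜 : Type*) {A G : Type*} [Field 𝕜] [Ring A] [Algebra 𝕜 A] [Group G] [Fintype G]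

noncomputable def groupAverage (P : G →* A) : A :=
  (Fintype.card G : 𝕜)⁻¹ • ∑ g, P g

variable {𝕜} (P : G →* A)

lemma map_mul_groupAverage (g : G) : P g * groupAverage 𝕜 P = groupAverage 𝕜 P := by
  rw [groupAverage, mul_smul_comm, Finset.mul_sum]
  simp_rw [← map_mul]
  exact congrArg _ (Fintype.sum_equiv (Equiv.mulLeft g) _ _ fun _ => rfl)

lemma groupAverage_mul_map (g : G) : groupAverage 𝕜 P * P g = groupAverage 𝕜 P := by
  rw [groupAverage, smul_mul_assoc, Finset.sum_mul]
  simp_rw [← map_mul]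
  exact congrArg _ (Fintype.sum_equiv (Equiv.mulRight g) _ _ fun _ => rfl)

lemma groupAverage_mul_self [NeZero (Fintype.card G : 𝕜)] :
    groupAverage 𝕜 P * groupAverage 𝕜 P = groupAverage 𝕜 P := by
  nth_rewrite 1 [groupAverage]
  rw [smul_mul_assoc, Finset.sum_mul]
  simp_rw [map_mul_groupAverage]
  rw [Finset.sum_const, Finset.card_univ, ← Nat.cast_smul_eq_nsmul 𝕜, inv_smul_smul₀ (NeZero.ne _)]

lemma eq_inv_two_smul_groupAverage_mul_add [NeZero (Fintype.card G : 𝕜)] {x : A}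
    (h : ∀ g, x = (2 : 𝕜)⁻¹ • (P g⁻¹ * x + x * P g)) :
    x = (2 : 𝕜)⁻¹ • (groupAverage 𝕜 P * x + x * groupAverage 𝕜 P) := by
  have hsum : (Fintype.card G : 𝕜) • x = (2 : 𝕜)⁻¹ • ((∑ g, P g) * x + x * ∑ g, P g) :=
    calc (Fintype.card G : 𝕜) • x = ∑ _g : G, x := by
          rw [Finset.sum_const, Finset.card_univ, Nat.cast_smul_eq_nsmul]
      _ = ∑ g, (2 : 𝕜)⁻¹ • (P g⁻¹ * x + x * P g) := Finset.sum_congr rfl fun g _ => h g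
      _ = (2 : 𝕜)⁻¹ • ((∑ g, P g) * x + x * ∑ g, P g) := by
          rw [← Finset.smul_sum, Finset.sum_add_distrib, ← Finset.sum_mul, ← Finset.mul_sum,
            Fintype.sum_equiv (Equiv.inv G) (fun g => P g⁻¹) P fun _ => rfl]
  rw [groupAverage, smul_mul_assoc, mul_smul_comm, ← smul_add, smul_comm, ← hsum,
    inv_smul_smul₀ (NeZero.ne _)]

theorem forall_eq_inv_two_smul_iff_eq_groupAverage_mul_mul [NeZero (2 : 𝕜)]
    [NeZero (Fintype.card G : 𝕜)] (x : A) :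
    (∀ a b : G, x = (2 : 𝕜)⁻¹ • (P b⁻¹ * x * P a + P a⁻¹ * x * P b)) ↔
      x = groupAverage 𝕜 P * x * groupAverage 𝕜 P := by
  constructor
  · intro h
    refine eq_mul_mul_of_eq_inv_two_smul_add (𝕜 := 𝕜) (groupAverage_mul_self P) ?_
    refine eq_inv_two_smul_groupAverage_mul_add P fun g => ?_
    simpa using h 1 g
  · intro h a b
    have absorb : ∀ c d : G, P c * x * P d = x := fun c d => by
      rw [h, ← mul_assoc, ← mul_assoc, map_mul_groupAverage, mul_assoc, groupAverage_mul_map]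
    rw [absorb, absorb, inv_two_smul_add_self]

end GroupAverage

def Equiv.Perm.arrowCongrHom {α : Type*} (β : Type*) : Equiv.Perm α →* Equiv.Perm (α → β) where
  toFun π := π.arrowCongr (Equiv.refl β)
  map_one' := rfl
  map_mul' _ _ := rfl

lemma permMat_eq_permMatrix (n m : ℕ) (π : Equiv.Perm (Fin m)) :
    permMat n m π = (Equiv.Perm.arrowCongrHom (Fin n) π).permMatrix ℂ := by
  ext f g
  simp [permMat, PEquiv.toMatrix_apply, Equiv.Perm.arrowCongrHom, Equiv.arrowCongr, eq_comm]

noncomputable def permMatHom (n m : ℕ) :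
    Equiv.Perm (Fin m) →* Matrix (Fin m → Fin n) (Fin m → Fin n) ℂ :=
  Matrix.permMatrixHom.comp (Equiv.Perm.arrowCongrHom (Fin n))

lemma permMatHom_apply (n m : ℕ) (π : Equiv.Perm (Fin m)) :
    permMatHom n m π = permMat n m π⁻¹ := by
  simp [permMatHom, permMat_eq_permMatrix]

lemma conjTranspose_permMat (n m : ℕ) (π : Equiv.Perm (Fin m)) :
    (permMat n m π)ᴴ = permMatHom n m π := by
  rw [permMat_eq_permMatrix, conjTranspose_permMatrix, ← map_inv, ← permMat_eq_permMatrix,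
    permMatHom_apply]

lemma symmetriser_eq_groupAverage (n m : ℕ) :
    symmetriser n m = groupAverage ℂ (permMatHom n m) := by
  simp_rw [symmetriser, groupAverage, permMatHom_apply, Fintype.card_perm, Fintype.card_fin]
  rw [Fintype.sum_equiv (Equiv.inv _) (fun π => permMat n m π⁻¹) (permMat n m) fun _ => rfl]

theorem density_sym_exchangeable_iff_general (n m : ℕ)
    (ρ : Matrix (Fin m → Fin n) (Fin m → Fin n) ℂ) :
    (∀ πl πr : Equiv.Perm (Fin m),
        ρ = (2 : ℂ)⁻¹ •
          (permMat n m πr * ρ * (permMat n m πl)ᴴ + permMat n m πl * ρ * (permMat n m πr)ᴴ)) ↔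
      ρ = symmetriser n m * ρ * symmetriser n m := by
  have hP : ∀ π, permMat n m π = permMatHom n m π⁻¹ := fun π => by rw [permMatHom_apply, inv_inv]
  simp_rw [conjTranspose_permMat, hP, symmetriser_eq_groupAverage]
  exact forall_eq_inv_two_smul_iff_eq_groupAverage_mul_mul (permMatHom n m) ρ

/-- A density matrix `ρ` satisfies `ρ = (1/2)(P_r ρ P_l† + P_l ρ P_r†)` for all
`π_l, π_r ∈ S_m` iff `ρ = Π_Sym ρ Π_Sym`. -/
theorem density_sym_exchangeable_iff (n m : ℕ) (hn : 1 ≤ n) (hm : 1 ≤ m)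
    (ρ : Matrix (Fin m → Fin n) (Fin m → Fin n) ℂ)
    (hρ : ρ.PosSemidef) (htr : ρ.trace = 1) :
    (∀ πl πr : Equiv.Perm (Fin m),
        ρ = (2 : ℂ)⁻¹ •
          (permMat n m πr * ρ * (permMat n m πl)ᴴ + permMat n m πl * ρ * (permMat n m πr)ᴴ)) ↔
      ρ = symmetriser n m * ρ * symmetriser n m :=
  density_sym_exchangeable_iff_general n m ρ
end

section
/- Let 1 ≤ m̌ < m, let N̂ = n^m̌ and M = n^{m−m̌} (so N = N̂·M), and let Π̂ be an N̂×N̂ Hermitian matrix with Π̂² = Π̂ (an orthogonal projection). Let C be a convex cone of N×N Hermitian matrices with I_Sym ⊆ C, and define the conditional set C_Π̂ := {G Hermitian N×N : (Π̂ ⊗ I_M)† G (Π̂ ⊗ I_M) ∈ C}, where ⊗ is the Kronecker product under the identification ℂ^N ≅ ℂ^N̂ ⊗ ℂ^M given by grouping the first m̌ and the last m−m̌ tensor factors. Then for every N×N Hermitian matrix G and all permutations τ_l, τ_r of {1,…,m−m̌}, the matrix G − (1/2)((I_N̂ ⊗ Q_{τ_l})† G (I_N̂ ⊗ Q_{τ_r})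 + (I_N̂ ⊗ Q_{τ_r})† G (I_N̂ ⊗ Q_{τ_l})) belongs to C_Π̂. -/
open Matrix

/-- The identification `ℂ^(n^m) ≅ ℂ^(n^mc) ⊗ ℂ^(n^(m-mc))` given by grouping the first
`mc` and the last `m - mc` tensor factors, at the level of coordinate indices. -/
def splitEquiv (n m mc : ℕ) (h : mc ≤ m) :
    (Fin m → Fin n) ≃ (Fin mc → Fin n) × (Fin (m - mc) → Fin n) :=
  ((Equiv.arrowCongr ((finCongr (Nat.add_sub_cancel' h)).symm.trans finSumFinEquiv.symm)
      (Equiv.refl (Fin n))).trans (Equiv.sumArrowEquivProdArrow _ _ _))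

/-- The Kronecker product `A ⊗ B` of an `n^mc × n^mc` matrix and an
`n^(m-mc) × n^(m-mc)` matrix, viewed as an `n^m × n^m` matrix under `splitEquiv`. -/
def embedKron (n m mc : ℕ) (h : mc ≤ m)
    (A : Matrix (Fin mc → Fin n) (Fin mc → Fin n) ℂ)
    (B : Matrix (Fin (m - mc) → Fin n) (Fin (m - mc) → Fin n) ℂ) :
    Matrix (Fin m → Fin n) (Fin m → Fin n) ℂ :=
  Matrix.reindex (splitEquiv n m mc h).symm (splitEquiv n m mc h).symm
    (Matrix.kroneckerMap (· * ·) A B)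


lemma embedKron_mul (n m mc : ℕ) (h : mc ≤ m)
    (A A' : Matrix (Fin mc → Fin n) (Fin mc → Fin n) ℂ)
    (B B' : Matrix (Fin (m - mc) → Fin n) (Fin (m - mc) → Fin n) ℂ) :
    embedKron n m mc h A B * embedKron n m mc h A' B' =
      embedKron n m mc h (A * A') (B * B') := by
  simp only [embedKron, Matrix.reindex_apply, Matrix.submatrix_mul_equiv,
    ← Matrix.mul_kronecker_mul]

def liftPerm (m mc : ℕ) (h : mc ≤ m) (τ : Equiv.Perm (Fin (m - mc))) :
    Equiv.Perm (Fin m) :=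
  (((finCongr (Nat.add_sub_cancel' h)).symm.trans finSumFinEquiv.symm).trans
      ((Equiv.sumCongr (Equiv.refl (Fin mc)) τ).trans
        (finSumFinEquiv.trans (finCongr (Nat.add_sub_cancel' h)))))

lemma splitEquiv_comp_liftPerm (n m mc : ℕ) (h : mc ≤ m) (τ : Equiv.Perm (Fin (m - mc)))
    (f : Fin m → Fin n) :
    splitEquiv n m mc h (f ∘ (liftPerm m mc h τ).symm) =
      ((splitEquiv n m mc h f).1, (splitEquiv n m mc h f).2 ∘ τ.symm) := by
  apply Prod.ext
  · funext a
    simp [splitEquiv, liftPerm, Equiv.sumArrowEquivProdArrow]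
  · funext b
    simp [splitEquiv, liftPerm, Equiv.sumArrowEquivProdArrow]

lemma embedKron_one_permMat (n m mc : ℕ) (h : mc ≤ m) (τ : Equiv.Perm (Fin (m - mc))) :
    embedKron n m mc h 1 (permMat n (m - mc) τ) = permMat n m (liftPerm m mc h τ) := by
  ext f g
  simp only [embedKron, Matrix.reindex_apply, Matrix.submatrix_apply,
    Matrix.kroneckerMap_apply, Matrix.one_apply, permMat, Matrix.of_apply,
    ite_mul, one_mul, zero_mul]
  have key : (g = f ∘ (liftPerm m mc h τ).symm) ↔
      ((splitEquiv n m mc h) f).1 = ((splitEquiv n m mc h) g).1 ∧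
      ((splitEquiv n m mc h) g).2 = ((splitEquiv n m mc h) f).2 ∘ τ.symm := by
    rw [← (splitEquiv n m mc h).apply_eq_iff_eq (x := g),
      splitEquiv_comp_liftPerm, Prod.ext_iff]
    constructor
    · rintro ⟨h1, h2⟩; exact ⟨h1.symm, h2⟩
    · rintro ⟨h1, h2⟩; exact ⟨h1.symm, h2⟩
  by_cases h1 : ((splitEquiv n m mc h) f).1 = ((splitEquiv n m mc h) g).1 <;>
  by_cases h2 : ((splitEquiv n m mc h) g).2 = ((splitEquiv n m mc h) f).2 ∘ τ.symm <;>
  simp_all [key]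

lemma herm_aux {α : Type*} [Fintype α] [DecidableEq α]
    (K P Q : Matrix α α ℂ) (hK : K.IsHermitian) :
    (K - (2 : ℂ)⁻¹ • (Pᴴ * K * Q + Qᴴ * K * P)).IsHermitian := by
  unfold Matrix.IsHermitian
  simp [Matrix.conjTranspose_smul, Matrix.conjTranspose_mul, hK.eq, Matrix.mul_assoc,
    add_comm, ← Complex.ofReal_ofNat]

lemma conj_symform {α : Type*} [Fintype α] [DecidableEq α]
    (P Pl Pr G : Matrix α α ℂ) (hl : P * Pl = Pl * P) (hr : P * Pr = Pr * P) :
    Pᴴ * (G - (2 : ℂ)⁻¹ • (Plᴴ * G * Pr + Prᴴ * G * Pl)) * P =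
      (Pᴴ * G * P) - (2 : ℂ)⁻¹ • (Plᴴ * (Pᴴ * G * P) * Pr + Prᴴ * (Pᴴ * G * P) * Pl) := by
  have hl' : Pᴴ * Plᴴ = Plᴴ * Pᴴ := by
    rw [← Matrix.conjTranspose_mul, ← Matrix.conjTranspose_mul, hl]
  have hr' : Pᴴ * Prᴴ = Prᴴ * Pᴴ := by
    rw [← Matrix.conjTranspose_mul, ← Matrix.conjTranspose_mul, hr]
  have h1 : Pᴴ * (Plᴴ * G * Pr) * P = Plᴴ * (Pᴴ * G * P) * Pr := by
    rw [show Pᴴ * (Plᴴ * G * Pr) * P = (Pᴴ * Plᴴ) * G * (Pr * P) by noncomm_ring, hl', ← hr]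
    noncomm_ring
  have h2 : Pᴴ * (Prᴴ * G * Pl) * P = Prᴴ * (Pᴴ * G * P) * Pl := by
    rw [show Pᴴ * (Prᴴ * G * Pl) * P = (Pᴴ * Prᴴ) * G * (Pl * P) by noncomm_ring, hr', ← hl]
    noncomm_ring
  simp only [Matrix.mul_sub, Matrix.sub_mul, Matrix.mul_smul, Matrix.smul_mul,
    Matrix.mul_add, Matrix.add_mul, h1, h2]

/-- Updating preserves symmetric exchangeability: if `I_Sym ⊆ C` then the conditional set
`C_Π̂ = {G Hermitian : (Π̂ ⊗ I)† G (Π̂ ⊗ I) ∈ C}` contains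
`G - (1/2)((I ⊗ Q_{τ_l})† G (I ⊗ Q_{τ_r}) + (I ⊗ Q_{τ_r})† G (I ⊗ Q_{τ_l}))`
for every Hermitian `G` and all permutations `τ_l, τ_r` of the last `m - m̌` factors. -/
theorem conditional_sym_exchangeable (n m mc : ℕ) (hn : 1 ≤ n) (hmc : 1 ≤ mc)
    (hlt : mc < m)
    (Proj : Matrix (Fin mc → Fin n) (Fin mc → Fin n) ℂ)
    (hProjHerm : Proj.IsHermitian) (hProjIdem : Proj * Proj = Proj)
    (C : Set (Matrix (Fin m → Fin n) (Fin m → Fin n) ℂ))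
    (hHerm : ∀ A ∈ C, A.IsHermitian)
    (hAdd : ∀ A ∈ C, ∀ B ∈ C, A + B ∈ C)
    (hSMul : ∀ (c : ℝ), 0 ≤ c → ∀ A ∈ C, (c : ℂ) • A ∈ C)
    (hI : ISym n m ⊆ C)
    (G : Matrix (Fin m → Fin n) (Fin m → Fin n) ℂ) (hG : G.IsHermitian)
    (τl τr : Equiv.Perm (Fin (m - mc))) :
    G - (2 : ℂ)⁻¹ •
        ((embedKron n m mc hlt.le 1 (permMat n (m - mc) τl))ᴴ * G *
            embedKron n m mc hlt.le 1 (permMat n (m - mc) τr) +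
          (embedKron n m mc hlt.le 1 (permMat n (m - mc) τr))ᴴ * G *
            embedKron n m mc hlt.le 1 (permMat n (m - mc) τl)) ∈
      {H : Matrix (Fin m → Fin n) (Fin m → Fin n) ℂ | H.IsHermitian ∧
        (embedKron n m mc hlt.le Proj 1)ᴴ * H * embedKron n m mc hlt.le Proj 1 ∈ C} := by

  set P := embedKron n m mc hlt.le Proj 1 with hP
  set Pl := embedKron n m mc hlt.le 1 (permMat n (m - mc) τl) with hPl
  set Pr := embedKron n m mc hlt.le 1 (permMat n (m - mc) τr) with hPr
  have hl : P * Pl = Pl * P := by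
    rw [hP, hPl, embedKron_mul, embedKron_mul, mul_one, one_mul, mul_one, one_mul]
  have hr : P * Pr = Pr * P := by
    rw [hP, hPr, embedKron_mul, embedKron_mul, mul_one, one_mul, mul_one, one_mul]
  refine ⟨herm_aux G Pl Pr hG, ?_⟩
  rw [conj_symform P Pl Pr G hl hr]
  set G' := Pᴴ * G * P with hG'
  have hG'h : G'.IsHermitian := by
    unfold Matrix.IsHermitian
    rw [hG', Matrix.conjTranspose_mul, Matrix.conjTranspose_mul,
      Matrix.conjTranspose_conjTranspose, hG.eq, Matrix.mul_assoc]
  exact hI ⟨G', liftPerm m mc hlt.le τl, liftPerm m mc hlt.le τr, hG'h, by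
    rw [symPerm, ← embedKron_one_permMat, ← embedKron_one_permMat]⟩
end
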